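/- arXiv:math/0011164 — 2 statements merged into one kernel-verified Lean document; each statement's English description precedes it below -/
import Mathlib

section
/- Suppose b₁, b₂ ∈ ℕ with b₁ + b₂ = d, let c ∈ ℤ, t ∈ ℕ, and i ∈ {1,2}. Then in B_d: K_i·K_{b₁,b₂} = v^{b_i}·K_{b₁,b₂}, and [K_i; c; t]·K_{b₁,b₂} = [b_i + c; t]·K_{b₁,b₂}. -/
noncomputable section

/-- The base field `F = ℚ(v)`. -/
abbrev F : Type := RatFunc ℚ

/-- The indeterminate `v`. -/
def v : F := RatFunc.X

/-- The quantum integer `[r] = (v^r − v^{−r})/(v − v⁻¹)`. -/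
def qint (r : ℤ) : F := (v ^ r - v ^ (-r)) / (v - v⁻¹)

/-- The quantum factorial `[m]! = [m][m−1]⋯[1]`. -/
def qfact (m : ℕ) : F := ∏ i ∈ Finset.range m, qint ((i : ℤ) + 1)

/-- The Gaussian binomial `[r; s] = [r][r−1]⋯[r−s+1]/[s]!`. -/
def qbinom (r : ℤ) (s : ℕ) : F := (∏ i ∈ Finset.range s, qint (r - (i : ℤ))) / qfact s

/-- Generators `e, f, K₁, K₁', K₂, K₂'`. -/
inductive Gen | e | f | K1 | K1' | K2 | K2'

def gen (x : Gen) : FreeAlgebra F Gen := FreeAlgebra.ι F x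

/-- The defining relations of `B_d`. -/
inductive BRel (d : ℕ) : FreeAlgebra F Gen → FreeAlgebra F Gen → Prop
  | comm : BRel d (gen .K1 * gen .K2) (gen .K2 * gen .K1)
  | K1K1' : BRel d (gen .K1 * gen .K1') 1
  | K1'K1 : BRel d (gen .K1' * gen .K1) 1
  | K2K2' : BRel d (gen .K2 * gen .K2') 1
  | K2'K2 : BRel d (gen .K2' * gen .K2) 1
  | K1e : BRel d (gen .K1 * gen .e * gen .K1') (v • gen .e)
  | K1f : BRel d (gen .K1 * gen .f * gen .K1') (v⁻¹ • gen .f)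
  | K2e : BRel d (gen .K2 * gen .e * gen .K2') (v⁻¹ • gen .e)
  | K2f : BRel d (gen .K2 * gen .f * gen .K2') (v • gen .f)
  | ef : BRel d (gen .e * gen .f - gen .f * gen .e)
      ((v - v⁻¹)⁻¹ • (gen .K1 * gen .K2' - gen .K1' * gen .K2))
  | KK : BRel d (gen .K1 * gen .K2) ((v ^ d) • 1)
  | minp : BRel d (((List.range (d + 1)).map
      (fun i => gen .K1 - algebraMap F (FreeAlgebra F Gen) (v ^ i))).prod) 0

/-- The algebra `B_d`: quotient of the free algebra by the relations above. -/
def B (d : ℕ) : Type := RingQuot (BRel d)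

instance (d : ℕ) : Ring (B d) := inferInstanceAs (Ring (RingQuot (BRel d)))
instance (d : ℕ) : Algebra F (B d) := inferInstanceAs (Algebra F (RingQuot (BRel d)))

/-- The image of `e` in `B_d`. -/
def bE (d : ℕ) : B d := RingQuot.mkAlgHom F (BRel d) (gen .e)
/-- The image of `f` in `B_d`. -/
def bF (d : ℕ) : B d := RingQuot.mkAlgHom F (BRel d) (gen .f)
/-- The image of `K₁` in `B_d`. -/
def bK1 (d : ℕ) : B d := RingQuot.mkAlgHom F (BRel d) (gen .K1)
/-- The image of `K₁⁻¹` in `B_d`. -/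
def bK1' (d : ℕ) : B d := RingQuot.mkAlgHom F (BRel d) (gen .K1')
/-- The image of `K₂` in `B_d`. -/
def bK2 (d : ℕ) : B d := RingQuot.mkAlgHom F (BRel d) (gen .K2)
/-- The image of `K₂⁻¹` in `B_d`. -/
def bK2' (d : ℕ) : B d := RingQuot.mkAlgHom F (BRel d) (gen .K2')

/-- `[X; c; t] = ∏_{i=1}^{t} (X·v^{c−i+1} − X⁻¹·v^{−c+i−1})/(v^i − v^{−i})`,
for an invertible `X` with inverse `Xinv`. -/
def qK {A : Type} [Ring A] [Algebra F A] (X Xinv : A) (c : ℤ) (t : ℕ) : A :=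
  ((List.range t).map (fun i =>
     (v ^ ((i : ℤ) + 1) - v ^ (-((i : ℤ) + 1)))⁻¹ •
       (v ^ (c - (i : ℤ)) • X - v ^ ((i : ℤ) - c) • Xinv))).prod

/-- `K_{b₁,b₂} = [K₁; b₁]·[K₂; b₂] ∈ B_d`. -/
def Kbox (d : ℕ) (b₁ b₂ : ℕ) : B d :=
  qK (bK1 d) (bK1' d) 0 b₁ * qK (bK2 d) (bK2' d) 0 b₂

/-- The divided power `e^{(m)} = e^m/[m]!`. -/
def eD (d : ℕ) (m : ℕ) : B d := (qfact m)⁻¹ • (bE d) ^ m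

/-- The divided power `f^{(m)} = f^m/[m]!`. -/
def fD (d : ℕ) (m : ℕ) : B d := (qfact m)⁻¹ • (bF d) ^ m


-- ==================== auxiliary development ====================

lemma aux_v_ne_zero : v ≠ 0 := RatFunc.X_ne_zero

lemma aux_v_pow_nat_inj {a b : ℕ} (h : v ^ a = v ^ b) : a = b := by
  have h2 : (algebraMap (Polynomial ℚ) (RatFunc ℚ)) (Polynomial.X ^ a)
      = (algebraMap (Polynomial ℚ) (RatFunc ℚ)) (Polynomial.X ^ b) := by
    simpa [map_pow, RatFunc.algebraMap_X, v] using h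
  have h3 : (Polynomial.X : Polynomial ℚ) ^ a = Polynomial.X ^ b :=
    RatFunc.algebraMap_injective ℚ h2
  have := congrArg Polynomial.natDegree h3
  simpa [Polynomial.natDegree_X_pow] using this

lemma aux_v_zpow_inj : Function.Injective (fun n : ℤ => v ^ n) := by
  intro a b h
  simp only at h
  rcases le_total a b with hab | hab
  · obtain ⟨m, rfl⟩ := Int.le.dest hab
    have : v ^ a * v ^ (m:ℤ) = v ^ a * 1 := by
      rw [← zpow_add₀ aux_v_ne_zero, mul_one]; exact h.symm
    have h1 : v ^ (m:ℤ) = 1 := mul_left_cancel₀ (zpow_ne_zero _ aux_v_ne_zero) this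
    have : v ^ m = v ^ 0 := by rw [pow_zero]; rw [zpow_natCast] at h1; exact h1
    simp [aux_v_pow_nat_inj this]
  · obtain ⟨m, rfl⟩ := Int.le.dest hab
    have : v ^ b * v ^ (m:ℤ) = v ^ b * 1 := by
      rw [← zpow_add₀ aux_v_ne_zero, mul_one]; exact h
    have h1 : v ^ (m:ℤ) = 1 := mul_left_cancel₀ (zpow_ne_zero _ aux_v_ne_zero) this
    have : v ^ m = v ^ 0 := by rw [pow_zero]; rw [zpow_natCast] at h1; exact h1
    simp [aux_v_pow_nat_inj this]

lemma aux_v_zpow_ne {a b : ℤ} (h : a ≠ b) : v ^ a ≠ v ^ b :=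
  fun hh => h (aux_v_zpow_inj hh)

lemma aux_v_zpow_sub_ne {a b : ℤ} (h : a ≠ b) : v ^ a - v ^ b ≠ 0 :=
  sub_ne_zero.2 (aux_v_zpow_ne h)

lemma aux_v_sub_inv_ne : v - v⁻¹ ≠ 0 := by
  have : v ^ (1:ℤ) - v ^ (-1:ℤ) ≠ 0 := aux_v_zpow_sub_ne (by omega)
  simpa [zpow_one, zpow_neg] using this

lemma aux_qint_ne {r : ℤ} (h : r ≠ 0) : qint r ≠ 0 := by
  unfold qint
  exact div_ne_zero (aux_v_zpow_sub_ne (by omega)) aux_v_sub_inv_ne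

/-- the scalar `1/(v^{i+1} - v^{-(i+1)})`. -/
def dlt (i : ℕ) : F := (v ^ ((i : ℤ) + 1) - v ^ (-((i : ℤ) + 1)))⁻¹

lemma aux_dlt_ne (i : ℕ) : dlt i ≠ 0 :=
  inv_ne_zero (aux_v_zpow_sub_ne (by omega))

lemma aux_qbinom_zero (r : ℤ) : qbinom r 0 = 1 := by
  simp [qbinom, qfact]

lemma aux_qbinom_succ (r : ℤ) (t : ℕ) :
    qbinom r (t+1) = qbinom r t * (dlt t * (v ^ (r - (t:ℤ)) - v ^ ((t:ℤ) - r))) := by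
  have key : qint (r - (t:ℤ)) / qint ((t:ℤ)+1)
      = dlt t * (v ^ (r - (t:ℤ)) - v ^ ((t:ℤ) - r)) := by
    unfold qint dlt
    rw [neg_sub, div_div_div_comm, div_self aux_v_sub_inv_ne, div_one,
      div_eq_mul_inv, mul_comm]
  unfold qbinom qfact
  rw [Finset.prod_range_succ, Finset.prod_range_succ, mul_div_mul_comm, key]

-- ==================== relations in `B d` ====================

lemma aux_KK' (d : ℕ) : bK1 d * bK1' d = 1 := by
  have := RingQuot.mkAlgHom_rel F (BRel.K1K1' (d := d))
  simp only [map_mul, map_one] at this; exact this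

lemma aux_K'K (d : ℕ) : bK1' d * bK1 d = 1 := by
  have := RingQuot.mkAlgHom_rel F (BRel.K1'K1 (d := d))
  simp only [map_mul, map_one] at this; exact this

lemma aux_LL' (d : ℕ) : bK2 d * bK2' d = 1 := by
  have := RingQuot.mkAlgHom_rel F (BRel.K2K2' (d := d))
  simp only [map_mul, map_one] at this; exact this

lemma aux_KL (d : ℕ) : bK1 d * bK2 d = (v ^ d : F) • 1 := by
  have := RingQuot.mkAlgHom_rel F (BRel.KK (d := d))
  simp only [map_mul, map_one, map_smul] at this; exact this

lemma aux_commKL (d : ℕ) : Commute (bK1 d) (bK2 d) := by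
  have := RingQuot.mkAlgHom_rel F (BRel.comm (d := d))
  simp only [map_mul] at this; exact this

lemma aux_Min (d : ℕ) :
    (((List.range (d + 1)).map
      (fun i => bK1 d - algebraMap F (B d) (v ^ i))).prod) = 0 := by
  have h := RingQuot.mkAlgHom_rel F (BRel.minp (d := d))
  have h2 : ((List.range (d + 1)).map
      (fun i => bK1 d - algebraMap F (B d) (v ^ i))).prod
      = RingQuot.mkAlgHom F (BRel d) (((List.range (d + 1)).map
      (fun i => gen .K1 - algebraMap F (FreeAlgebra F Gen) (v ^ i))).prod) := by
    rw [map_list_prod, List.map_map]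
    congr 1
    apply List.map_congr_left
    intro i _
    simp [Function.comp, bK1, map_sub, AlgHom.commutes]
    rfl
  rw [h2, h, map_zero]
  rfl

lemma aux_L_eq (d : ℕ) : bK2 d = (v ^ d : F) • bK1' d := by
  have h1 : bK1' d * (bK1 d * bK2 d) = bK2 d := by
    rw [← mul_assoc, aux_K'K, one_mul]
  rw [aux_KL] at h1
  rw [← h1, mul_smul_comm, mul_one]

lemma aux_L'_eq (d : ℕ) : bK2' d = ((v : F) ^ d)⁻¹ • bK1 d := by
  have h1 : (bK1 d * bK2 d) * bK2' d = bK1 d := by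
    rw [mul_assoc, aux_LL', mul_one]
  rw [aux_KL, smul_mul_assoc, one_mul] at h1
  rw [← h1, smul_smul, inv_mul_cancel₀ (pow_ne_zero _ aux_v_ne_zero), one_smul]

lemma aux_commKK' (d : ℕ) : Commute (bK1 d) (bK1' d) := by
  unfold Commute SemiconjBy
  rw [aux_KK', aux_K'K]

lemma aux_commKL' (d : ℕ) : Commute (bK1 d) (bK2' d) := by
  rw [aux_L'_eq]
  exact (Commute.refl (bK1 d)).smul_right _

lemma aux_invpow (d n : ℕ) : (bK1' d) ^ n * (bK1 d) ^ n = 1 := by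
  induction n with
  | zero => simp
  | succ n ih =>
    rw [pow_succ, pow_succ', mul_assoc ((bK1' d) ^ n), ← mul_assoc (bK1' d),
      aux_K'K, one_mul, ih]

-- ==================== polynomials ====================

open Polynomial in
/-- polynomial representing `K₁^{b} · [K₁; b]`. -/
def p1 (b : ℕ) : Polynomial F :=
  ∏ i ∈ Finset.range b, (C (dlt i) * (C (v ^ (-(i:ℤ))) * X ^ 2 - C (v ^ ((i:ℤ)))))

open Polynomial in
/-- polynomial representing `K₁^{b} · [K₂; b]`. -/
def p2 (d b : ℕ) : Polynomial F :=
  ∏ i ∈ Finset.range b,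
    (C (dlt i) * (C (v ^ ((d:ℤ) - (i:ℤ))) - C (v ^ ((i:ℤ) - (d:ℤ))) * X ^ 2))

open Polynomial in
/-- the minimal polynomial of `K₁`. -/
def polM (d : ℕ) : Polynomial F := ∏ i ∈ Finset.range (d + 1), (X - C (v ^ i))

open Polynomial in
lemma aux_key_dvd (d b₁ b₂ : ℕ) (hb : b₁ + b₂ = d) :
    polM d ∣ (X - C (v ^ b₁)) * (p1 b₁ * p2 d b₂) := by
  unfold polM
  apply Finset.prod_dvd_of_coprime
  · intro i hi j hj hij
    exact Polynomial.pairwise_coprime_X_sub_C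
      (s := fun i : ℕ => v ^ i) (fun a b h => aux_v_pow_nat_inj h) hij
  · intro j hj
    rw [Polynomial.dvd_iff_isRoot]
    have hj' : j ≤ d := Nat.lt_succ_iff.mp (Finset.mem_range.mp hj)
    unfold Polynomial.IsRoot p1 p2
    simp only [eval_mul, eval_sub, eval_pow, eval_X, eval_C, eval_prod, eval_one]
    rcases lt_trichotomy j b₁ with h | h | h
    · have hz : ∏ i ∈ Finset.range b₁,
          (dlt i * (v ^ (-(i:ℤ)) * (v ^ j) ^ 2 - v ^ ((i:ℤ)))) = 0 := by
        apply Finset.prod_eq_zero (Finset.mem_range.mpr h)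
        have hv : v ^ (-(j:ℤ)) * (v ^ j) ^ 2 = v ^ ((j:ℤ)) := by
          rw [← zpow_natCast v j, ← zpow_natCast (v ^ ((j:ℤ))) 2, ← zpow_mul,
            ← zpow_add₀ aux_v_ne_zero]
          congr 1; push_cast; ring
        rw [hv, sub_self, mul_zero]
      rw [hz]; ring
    · subst h; simp
    · have hlt : d - j < b₂ := by omega
      have hz : ∏ i ∈ Finset.range b₂,
          (dlt i * (v ^ ((d:ℤ) - (i:ℤ)) - v ^ ((i:ℤ) - (d:ℤ)) * (v ^ j) ^ 2)) = 0 := by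
        apply Finset.prod_eq_zero (Finset.mem_range.mpr hlt)
        have he1 : (d:ℤ) - ((d - j : ℕ) : ℤ) = (j:ℤ) := by
          push_cast [Nat.cast_sub hj']; ring
        have he2 : ((d - j : ℕ) : ℤ) - (d:ℤ) = -(j:ℤ) := by
          push_cast [Nat.cast_sub hj']; ring
        rw [he1, he2]
        have hv : v ^ (-(j:ℤ)) * (v ^ j) ^ 2 = v ^ ((j:ℤ)) := by
          rw [← zpow_natCast v j, ← zpow_natCast (v ^ ((j:ℤ))) 2, ← zpow_mul,
            ← zpow_add₀ aux_v_ne_zero]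
          congr 1; push_cast; ring
        rw [hv, sub_self, mul_zero]
      rw [hz]; ring

lemma aux_list_prod_eq {M : Type} [CommMonoid M] (f : ℕ → M) (n : ℕ) :
    ∏ i ∈ Finset.range n, f i = ((List.range n).map f).prod := by
  induction n with
  | zero => simp
  | succ n ih => rw [Finset.prod_range_succ, List.range_succ]; simp [ih]

open Polynomial in
lemma aux_aeval_polM (d : ℕ) : Polynomial.aeval (bK1 d) (polM d) = 0 := by
  have h1 : polM d = ((List.range (d+1)).map (fun i => (X : Polynomial F) - C (v ^ i))).prod :=
    aux_list_prod_eq _ _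
  rw [h1, map_list_prod, List.map_map]
  have h2 : (List.range (d+1)).map ((Polynomial.aeval (bK1 d)) ∘ fun i => (X : Polynomial F) - C (v ^ i))
      = (List.range (d+1)).map (fun i => bK1 d - algebraMap F (B d) (v ^ i)) := by
    apply List.map_congr_left
    intro i _
    simp [Function.comp]
  rw [h2, aux_Min]

-- ==================== products in `B d` ====================

lemma aux_qK_succ {A : Type} [Ring A] [Algebra F A] (X Xinv : A) (c : ℤ) (t : ℕ) :
    qK X Xinv c (t+1) = qK X Xinv c t *
      (dlt t • (v ^ (c - (t:ℤ)) • X - v ^ ((t:ℤ) - c) • Xinv)) := by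
  unfold qK dlt
  rw [List.range_succ]
  simp

lemma aux_comm_qK1 (d : ℕ) (c : ℤ) (t : ℕ) :
    Commute (bK1 d) (qK (bK1 d) (bK1' d) c t) := by
  unfold qK
  apply Commute.list_prod_right
  intro y hy
  simp only [List.mem_map] at hy
  obtain ⟨i, _, rfl⟩ := hy
  exact (((Commute.refl (bK1 d)).smul_right _).sub_right
    ((aux_commKK' d).smul_right _)).smul_right _

lemma aux_comm_qK2 (d : ℕ) (c : ℤ) (t : ℕ) :
    Commute (bK1 d) (qK (bK2 d) (bK2' d) c t) := by
  unfold qK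
  apply Commute.list_prod_right
  intro y hy
  simp only [List.mem_map] at hy
  obtain ⟨i, _, rfl⟩ := hy
  exact ((((aux_commKL d)).smul_right _).sub_right
    ((aux_commKL' d).smul_right _)).smul_right _

open Polynomial in
lemma aux_L1 (d b : ℕ) :
    (bK1 d) ^ b * qK (bK1 d) (bK1' d) 0 b = Polynomial.aeval (bK1 d) (p1 b) := by
  induction b with
  | zero => simp [qK, p1]
  | succ b ih =>
    rw [aux_qK_succ, pow_succ,
      mul_assoc ((bK1 d) ^ b) (bK1 d), ← mul_assoc (bK1 d) (qK (bK1 d) (bK1' d) 0 b),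
      (aux_comm_qK1 d 0 b).eq, mul_assoc (qK (bK1 d) (bK1' d) 0 b), ← mul_assoc ((bK1 d) ^ b),
      ih]
    have hf : bK1 d * (dlt b • (v ^ ((0:ℤ) - (b:ℤ)) • bK1 d - v ^ ((b:ℤ) - 0) • bK1' d))
        = dlt b • (v ^ (-(b:ℤ)) • (bK1 d) ^ 2 - v ^ ((b:ℤ)) • (1 : B d)) := by
      rw [mul_smul_comm, mul_sub, mul_smul_comm, mul_smul_comm, aux_KK', ← pow_two,
        zero_sub, sub_zero]
    rw [hf]
    unfold p1
    rw [Finset.prod_range_succ, map_mul]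
    have haev : (Polynomial.aeval (bK1 d)) (C (dlt b) * (C (v ^ (-(b:ℤ))) * X ^ 2 - C (v ^ ((b:ℤ)))))
        = dlt b • (v ^ (-(b:ℤ)) • (bK1 d) ^ 2 - v ^ ((b:ℤ)) • (1 : B d)) := by
      simp [Algebra.smul_def, mul_sub]
    rw [haev]

open Polynomial in
lemma aux_factor2 (d i : ℕ) :
    (dlt i • (v ^ ((0:ℤ) - (i:ℤ)) • bK2 d - v ^ ((i:ℤ) - 0) • bK2' d))
      = dlt i • (v ^ ((d:ℤ) - (i:ℤ)) • bK1' d - v ^ ((i:ℤ) - (d:ℤ)) • bK1 d) := by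
  rw [aux_L_eq, aux_L'_eq, smul_smul, smul_smul]
  have e1 : v ^ ((0:ℤ) - (i:ℤ)) * v ^ (d:ℕ) = v ^ ((d:ℤ) - (i:ℤ)) := by
    rw [← zpow_natCast v d, ← zpow_add₀ aux_v_ne_zero]; congr 1 <;> ring
  have e2 : v ^ ((i:ℤ) - 0) * ((v : F) ^ (d:ℕ))⁻¹ = v ^ ((i:ℤ) - (d:ℤ)) := by
    rw [← zpow_natCast v d, ← zpow_neg, ← zpow_add₀ aux_v_ne_zero]; congr 1 <;> ring
  rw [e1, e2]

open Polynomial in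
lemma aux_L2 (d b : ℕ) :
    (bK1 d) ^ b * qK (bK2 d) (bK2' d) 0 b = Polynomial.aeval (bK1 d) (p2 d b) := by
  induction b with
  | zero => simp [qK, p2]
  | succ b ih =>
    rw [aux_qK_succ, pow_succ,
      mul_assoc ((bK1 d) ^ b) (bK1 d), ← mul_assoc (bK1 d) (qK (bK2 d) (bK2' d) 0 b),
      (aux_comm_qK2 d 0 b).eq, mul_assoc (qK (bK2 d) (bK2' d) 0 b), ← mul_assoc ((bK1 d) ^ b),
      ih, aux_factor2]
    have hf : bK1 d * (dlt b • (v ^ ((d:ℤ) - (b:ℤ)) • bK1' d - v ^ ((b:ℤ) - (d:ℤ)) • bK1 d))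
        = dlt b • (v ^ ((d:ℤ) - (b:ℤ)) • (1 : B d) - v ^ ((b:ℤ) - (d:ℤ)) • (bK1 d) ^ 2) := by
      rw [mul_smul_comm, mul_sub, mul_smul_comm, mul_smul_comm, aux_KK', ← pow_two]
    rw [hf]
    unfold p2
    rw [Finset.prod_range_succ, map_mul]
    have haev : (Polynomial.aeval (bK1 d)) (C (dlt b) * (C (v ^ ((d:ℤ) - (b:ℤ))) - C (v ^ ((b:ℤ) - (d:ℤ))) * X ^ 2))
        = dlt b • (v ^ ((d:ℤ) - (b:ℤ)) • (1 : B d) - v ^ ((b:ℤ) - (d:ℤ)) • (bK1 d) ^ 2) := by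
      simp [Algebra.smul_def, mul_sub]
    rw [haev]

open Polynomial in
lemma aux_Kd_Kbox (d b₁ b₂ : ℕ) (hb : b₁ + b₂ = d) :
    (bK1 d) ^ d * Kbox d b₁ b₂ = Polynomial.aeval (bK1 d) (p1 b₁ * p2 d b₂) := by
  rw [map_mul, ← aux_L1, ← aux_L2]
  unfold Kbox
  have hpow : (bK1 d) ^ d = (bK1 d) ^ b₁ * (bK1 d) ^ b₂ := by rw [← pow_add, hb]
  rw [hpow, mul_assoc ((bK1 d) ^ b₁) ((bK1 d) ^ b₂),
    ← mul_assoc ((bK1 d) ^ b₂) (qK (bK1 d) (bK1' d) 0 b₁),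
    ((aux_comm_qK1 d 0 b₁).pow_left b₂).eq,
    mul_assoc (qK (bK1 d) (bK1' d) 0 b₁), ← mul_assoc ((bK1 d) ^ b₁)]

open Polynomial in
lemma aux_eig1 (d b₁ b₂ : ℕ) (hb : b₁ + b₂ = d) :
    bK1 d * Kbox d b₁ b₂ = (v ^ b₁ : F) • Kbox d b₁ b₂ := by
  obtain ⟨Q, hQ⟩ := aux_key_dvd d b₁ b₂ hb
  have h0 : (bK1 d - algebraMap F (B d) (v ^ b₁)) * ((bK1 d) ^ d * Kbox d b₁ b₂) = 0 := by
    rw [aux_Kd_Kbox d b₁ b₂ hb]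
    have he : (bK1 d - algebraMap F (B d) (v ^ b₁))
        = Polynomial.aeval (bK1 d) ((X : Polynomial F) - C (v ^ b₁)) := by simp
    rw [he, ← map_mul, hQ, map_mul, aux_aeval_polM, zero_mul]
  have hc2 : Commute (bK1 d - algebraMap F (B d) (v ^ b₁)) ((bK1 d) ^ d) := by
    apply Commute.sub_left
    · exact (Commute.refl (bK1 d)).pow_right d
    · exact (Algebra.commute_algebraMap_left _ _).pow_right d
  have h1 : (bK1 d - algebraMap F (B d) (v ^ b₁)) * Kbox d b₁ b₂ = 0 := by
    have key : (bK1' d) ^ d * ((bK1 d - algebraMap F (B d) (v ^ b₁)) * ((bK1 d) ^ d * Kbox d b₁ b₂))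
        = ((bK1' d) ^ d * (bK1 d) ^ d) * ((bK1 d - algebraMap F (B d) (v ^ b₁)) * Kbox d b₁ b₂) := by
      conv_lhs => rw [← mul_assoc, ← mul_assoc, mul_assoc ((bK1' d) ^ d), hc2.eq,
        ← mul_assoc ((bK1' d) ^ d), mul_assoc]
    have step : (bK1 d - algebraMap F (B d) (v ^ b₁)) * Kbox d b₁ b₂
        = (bK1' d) ^ d * ((bK1 d - algebraMap F (B d) (v ^ b₁)) * ((bK1 d) ^ d * Kbox d b₁ b₂)) := by
      rw [key, aux_invpow, one_mul]
    rw [step, h0, mul_zero]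
  rw [sub_mul, sub_eq_zero] at h1
  rw [h1, ← Algebra.smul_def]

lemma aux_eig1' (d b₁ b₂ : ℕ) (hb : b₁ + b₂ = d) :
    bK1' d * Kbox d b₁ b₂ = ((v : F) ^ b₁)⁻¹ • Kbox d b₁ b₂ := by
  have h := aux_eig1 d b₁ b₂ hb
  have h2 : bK1' d * (bK1 d * Kbox d b₁ b₂) = Kbox d b₁ b₂ := by
    rw [← mul_assoc, aux_K'K, one_mul]
  rw [h, mul_smul_comm] at h2
  calc bK1' d * Kbox d b₁ b₂
      = ((v : F) ^ b₁)⁻¹ • ((v ^ b₁ : F) • (bK1' d * Kbox d b₁ b₂)) := by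
        rw [smul_smul, inv_mul_cancel₀ (pow_ne_zero _ aux_v_ne_zero), one_smul]
    _ = ((v : F) ^ b₁)⁻¹ • Kbox d b₁ b₂ := by rw [h2]

lemma aux_eig2 (d b₁ b₂ : ℕ) (hb : b₁ + b₂ = d) :
    bK2 d * Kbox d b₁ b₂ = (v ^ b₂ : F) • Kbox d b₁ b₂ := by
  rw [aux_L_eq, smul_mul_assoc, aux_eig1' d b₁ b₂ hb, smul_smul]
  congr 1
  rw [← hb, pow_add, mul_comm ((v:F) ^ b₁), mul_inv_cancel_right₀ (pow_ne_zero _ aux_v_ne_zero)]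

lemma aux_eig2' (d b₁ b₂ : ℕ) (hb : b₁ + b₂ = d) :
    bK2' d * Kbox d b₁ b₂ = ((v : F) ^ b₂)⁻¹ • Kbox d b₁ b₂ := by
  rw [aux_L'_eq, smul_mul_assoc, aux_eig1 d b₁ b₂ hb, smul_smul]
  congr 1
  rw [← hb, pow_add, mul_inv, mul_comm ((v : F) ^ b₁)⁻¹ ((v : F) ^ b₂)⁻¹, mul_assoc,
    inv_mul_cancel₀ (pow_ne_zero _ aux_v_ne_zero), mul_one]

lemma aux_qK_eig {d : ℕ} {Kx Kx' w : B d} {m : ℤ} (h1 : Kx * w = (v ^ m) • w)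
    (h2 : Kx' * w = (v ^ (-m)) • w) (c : ℤ) (t : ℕ) :
    qK Kx Kx' c t * w = qbinom (m + c) t • w := by
  induction t with
  | zero => simp [qK, aux_qbinom_zero]
  | succ t ih =>
    rw [aux_qK_succ, mul_assoc]
    have hfac : (dlt t • (v ^ (c - (t:ℤ)) • Kx - v ^ ((t:ℤ) - c) • Kx')) * w
        = (dlt t * (v ^ ((m + c) - (t:ℤ)) - v ^ ((t:ℤ) - (m + c)))) • w := by
      rw [smul_mul_assoc, sub_mul, smul_mul_assoc, smul_mul_assoc, h1, h2,
        smul_smul, smul_smul, ← zpow_add₀ aux_v_ne_zero, ← zpow_add₀ aux_v_ne_zero,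
        ← sub_smul, smul_smul]
      congr 2 <;> first | ring | (congr 1 <;> ring)
    rw [hfac, mul_smul_comm, ih, smul_smul, aux_qbinom_succ]
    congr 1
    ring

/-- for `b₁ + b₂ = d`, `c ∈ ℤ`, `t ∈ ℕ` and `i ∈ {1,2}`:
`K_i·K_{b₁,b₂} = v^{b_i}·K_{b₁,b₂}` and `[K_i; c; t]·K_{b₁,b₂} = [b_i + c; t]·K_{b₁,b₂}`. -/
theorem stmt11 (d : ℕ) (b₁ b₂ : ℕ) (hb : b₁ + b₂ = d) (c : ℤ) (t : ℕ) :
    bK1 d * Kbox d b₁ b₂ = (v ^ b₁) • Kbox d b₁ b₂ ∧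
    bK2 d * Kbox d b₁ b₂ = (v ^ b₂) • Kbox d b₁ b₂ ∧
    qK (bK1 d) (bK1' d) c t * Kbox d b₁ b₂ = qbinom ((b₁ : ℤ) + c) t • Kbox d b₁ b₂ ∧
    qK (bK2 d) (bK2' d) c t * Kbox d b₁ b₂ = qbinom ((b₂ : ℤ) + c) t • Kbox d b₁ b₂ := by
  have h1 := aux_eig1 d b₁ b₂ hb
  have h2 := aux_eig2 d b₁ b₂ hb
  have e1 : bK1 d * Kbox d b₁ b₂ = (v ^ ((b₁:ℕ):ℤ)) • Kbox d b₁ b₂ := by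
    rw [h1, zpow_natCast]
  have e1' : bK1' d * Kbox d b₁ b₂ = (v ^ (-((b₁:ℕ):ℤ))) • Kbox d b₁ b₂ := by
    rw [aux_eig1' d b₁ b₂ hb, zpow_neg, zpow_natCast]
  have e2 : bK2 d * Kbox d b₁ b₂ = (v ^ ((b₂:ℕ):ℤ)) • Kbox d b₁ b₂ := by
    rw [h2, zpow_natCast]
  have e2' : bK2' d * Kbox d b₁ b₂ = (v ^ (-((b₂:ℕ):ℤ))) • Kbox d b₁ b₂ := by
    rw [aux_eig2' d b₁ b₂ hb, zpow_neg, zpow_natCast]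
  exact ⟨h1, h2, aux_qK_eig e1 e1' c t, aux_qK_eig e2 e2' c t⟩
end
end

section
/- In B_d, for a, b₁, b₂ ∈ ℕ with b₁ + b₂ = d: e^a·K_{b₁,b₂} = 0 = K_{b₁,b₂}·f^a whenever a + b₁ ≥ d + 1, and f^a·K_{b₁,b₂} = 0 = K_{b₁,b₂}·e^a whenever a + b₂ ≥ d + 1. In particular, e^{d+1} = 0 and f^{d+1} = 0 in B_d. -/
noncomputable section

-- chunk 1: derived relations
section Lemmas
open Polynomial

variable {d : ℕ}

lemma brel {x y : FreeAlgebra F Gen} (h : BRel d x y) :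
    RingQuot.mkAlgHom F (BRel d) x = RingQuot.mkAlgHom F (BRel d) y :=
  RingQuot.mkAlgHom_rel F h

lemma rK1K1' : bK1 d * bK1' d = 1 := by
  have h0 := brel (d := d) BRel.K1K1'
  simp only [gen, map_mul, map_one] at h0
  exact h0

lemma rK1'K1 : bK1' d * bK1 d = 1 := by
  have h0 := brel (d := d) BRel.K1'K1
  simp only [gen, map_mul, map_one] at h0
  exact h0

lemma rK2K2' : bK2 d * bK2' d = 1 := by
  have h0 := brel (d := d) BRel.K2K2'
  simp only [gen, map_mul, map_one] at h0
  exact h0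

lemma rK1e : bK1 d * bE d = v • (bE d * bK1 d) := by
  have h : bK1 d * bE d * bK1' d = v • bE d := by
    have h0 := brel (d := d) BRel.K1e
    simp only [gen, map_mul, map_smul] at h0
    exact h0
  calc bK1 d * bE d = bK1 d * bE d * (bK1' d * bK1 d) := by rw [rK1'K1, mul_one]
    _ = (bK1 d * bE d * bK1' d) * bK1 d := by noncomm_ring
    _ = v • (bE d * bK1 d) := by rw [h, smul_mul_assoc]

lemma rK1f : bK1 d * bF d = v⁻¹ • (bF d * bK1 d) := by
  have h : bK1 d * bF d * bK1' d = v⁻¹ • bF d := by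
    have h0 := brel (d := d) BRel.K1f
    simp only [gen, map_mul, map_smul] at h0
    exact h0
  calc bK1 d * bF d = bK1 d * bF d * (bK1' d * bK1 d) := by rw [rK1'K1, mul_one]
    _ = (bK1 d * bF d * bK1' d) * bK1 d := by noncomm_ring
    _ = v⁻¹ • (bF d * bK1 d) := by rw [h, smul_mul_assoc]

lemma rKK : bK1 d * bK2 d = (v ^ d) • 1 := by
  have h0 := brel (d := d) BRel.KK
  simp only [gen, map_mul, map_smul, map_one] at h0
  exact h0

lemma rK2eq : bK2 d = (v ^ d) • bK1' d := by
  calc bK2 d = (bK1' d * bK1 d) * bK2 d := by rw [rK1'K1, one_mul]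
    _ = bK1' d * (bK1 d * bK2 d) := by rw [mul_assoc]
    _ = (v ^ d) • bK1' d := by rw [rKK, mul_smul_comm, mul_one]

lemma rK2'eq : bK2' d = (v ^ d)⁻¹ • bK1 d := by
  have h1 : bK1 d = bK1 d * (bK2 d * bK2' d) := by rw [rK2K2', mul_one]
  have h2 : bK1 d = (v ^ d) • bK2' d := by
    rw [h1, ← mul_assoc, rKK, smul_mul_assoc, one_mul]
  rw [h2, smul_smul, inv_mul_cancel₀, one_smul]
  exact pow_ne_zero _ (by simpa [v] using RatFunc.X_ne_zero)

lemma rminp : ((List.range (d + 1)).map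
    (fun i => bK1 d - algebraMap F (B d) (v ^ i))).prod = 0 := by
  have := brel (d := d) BRel.minp
  rw [map_zero, map_list_prod] at this
  refine Eq.trans ?_ this
  rw [List.map_map]
  congr 1
  refine List.map_congr_left fun i _ => ?_
  simp only [Function.comp, bK1, gen, map_sub, AlgHom.commutes]
  rfl

end Lemmas
-- chunk 2: spectral projections
section Proj
open Polynomial

lemma v_ne_zero : (v : F) ≠ 0 := by simpa [v] using RatFunc.X_ne_zero

lemma vpow_injective : Function.Injective (fun n : ℕ => (v : F) ^ n) := by
  intro m n h
  have hX : (RatFunc.X : RatFunc ℚ) ^ m = RatFunc.X ^ n := h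
  have : (algebraMap (Polynomial ℚ) (RatFunc ℚ)) (Polynomial.X ^ m)
      = (algebraMap (Polynomial ℚ) (RatFunc ℚ)) (Polynomial.X ^ n) := by
    simpa [map_pow, RatFunc.algebraMap_X] using hX
  have hp := RatFunc.algebraMap_injective ℚ this
  have := congrArg Polynomial.natDegree hp
  simpa using this

variable {d : ℕ}

/-- The Lagrange projection polynomial at node `v^j`. -/
noncomputable def pj (d j : ℕ) : B d :=
  aeval (bK1 d) (Lagrange.basis (Finset.range (d + 1)) (fun i => (v : F) ^ i) j)

lemma list_prod_range {M : Type*} [CommMonoid M] (g : ℕ → M) (n : ℕ) :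
    ((List.range n).map g).prod = ∏ i ∈ Finset.range n, g i := by
  induction n with
  | zero => simp
  | succ n ih => rw [List.range_succ, Finset.prod_range_succ, List.map_append, List.prod_append, ih]; simp

lemma aeval_nodal : aeval (bK1 d)
    (Lagrange.nodal (Finset.range (d + 1)) (fun i => (v : F) ^ i)) = 0 := by
  have h : Lagrange.nodal (Finset.range (d + 1)) (fun i => (v : F) ^ i)
      = ((List.range (d + 1)).map (fun i => (X : F[X]) - C (v ^ i))).prod := by
    rw [Lagrange.nodal, list_prod_range]
  rw [h, map_list_prod]
  rw [← rminp (d := d)]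
  congr 1
  rw [List.map_map]
  refine List.map_congr_left fun i _ => ?_
  simp [Function.comp, map_sub, aeval_X, aeval_C]

lemma sum_pj : ∑ j ∈ Finset.range (d + 1), pj d j = 1 := by
  have hinj : Set.InjOn (fun i => (v : F) ^ i) (Finset.range (d + 1)) :=
    fun a _ b _ h => vpow_injective h
  have h := Lagrange.sum_basis hinj ⟨0, Finset.mem_range.mpr (Nat.succ_pos d)⟩
  calc ∑ j ∈ Finset.range (d + 1), pj d j
      = aeval (bK1 d) (∑ j ∈ Finset.range (d + 1),
          Lagrange.basis (Finset.range (d + 1)) (fun i => (v : F) ^ i) j) := by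
        rw [map_sum]; rfl
    _ = 1 := by rw [h, map_one]

end Proj
-- chunk 3: eigenvalue lemmas
section Eigen
open Polynomial
variable {d : ℕ}

lemma X_sub_C_mul_basis {j : ℕ} (hj : j ∈ Finset.range (d + 1)) :
    ((X : F[X]) - C ((v : F) ^ j)) *
      Lagrange.basis (Finset.range (d + 1)) (fun i => (v : F) ^ i) j
    = (∏ i ∈ (Finset.range (d + 1)).erase j, C (((v : F) ^ j - v ^ i)⁻¹)) *
        Lagrange.nodal (Finset.range (d + 1)) (fun i => (v : F) ^ i) := by
  rw [Lagrange.basis]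
  simp only [Lagrange.basisDivisor]
  rw [Finset.prod_mul_distrib, mul_left_comm, Lagrange.nodal,
    ← Finset.mul_prod_erase _ _ hj]

lemma K1_mul_pj {j : ℕ} (hj : j ∈ Finset.range (d + 1)) :
    bK1 d * pj d j = ((v : F) ^ j) • pj d j := by
  have h0 : aeval (bK1 d) (((X : F[X]) - C ((v : F) ^ j)) *
      Lagrange.basis (Finset.range (d + 1)) (fun i => (v : F) ^ i) j) = 0 := by
    rw [X_sub_C_mul_basis hj, map_mul, aeval_nodal, mul_zero]
  rw [sub_mul, map_sub, map_mul, map_mul, aeval_X, aeval_C, sub_eq_zero] at h0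
  rw [pj, h0, ← Algebra.smul_def]

lemma pj_mul_K1 {j : ℕ} (hj : j ∈ Finset.range (d + 1)) :
    pj d j * bK1 d = ((v : F) ^ j) • pj d j := by
  have h1 : pj d j * bK1 d
      = aeval (bK1 d) (Lagrange.basis (Finset.range (d + 1)) (fun i => (v : F) ^ i) j * X) := by
    rw [map_mul, aeval_X]; rfl
  have h2 : bK1 d * pj d j
      = aeval (bK1 d) (X * Lagrange.basis (Finset.range (d + 1)) (fun i => (v : F) ^ i) j) := by
    rw [map_mul, aeval_X]; rfl
  rw [h1, mul_comm, ← h2, K1_mul_pj hj]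

lemma K1'_mul_pj {j : ℕ} (hj : j ∈ Finset.range (d + 1)) :
    bK1' d * pj d j = ((v : F) ^ j)⁻¹ • pj d j := by
  have hv : ((v : F) ^ j) ≠ 0 := pow_ne_zero _ v_ne_zero
  calc bK1' d * pj d j
      = ((v:F)^j)⁻¹ • (bK1' d * (((v:F)^j) • pj d j)) := by
        rw [mul_smul_comm, smul_smul, inv_mul_cancel₀ hv, one_smul]
    _ = ((v:F)^j)⁻¹ • (bK1' d * (bK1 d * pj d j)) := by rw [K1_mul_pj hj]
    _ = ((v:F)^j)⁻¹ • pj d j := by rw [← mul_assoc, rK1'K1, one_mul]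

lemma pj_mul_K1' {j : ℕ} (hj : j ∈ Finset.range (d + 1)) :
    pj d j * bK1' d = ((v : F) ^ j)⁻¹ • pj d j := by
  have hv : ((v : F) ^ j) ≠ 0 := pow_ne_zero _ v_ne_zero
  calc pj d j * bK1' d
      = ((v:F)^j)⁻¹ • ((((v:F)^j) • pj d j) * bK1' d) := by
        rw [smul_mul_assoc, smul_smul, inv_mul_cancel₀ hv, one_smul]
    _ = ((v:F)^j)⁻¹ • ((pj d j * bK1 d) * bK1' d) := by rw [pj_mul_K1 hj]
    _ = ((v:F)^j)⁻¹ • pj d j := by rw [mul_assoc, rK1K1', mul_one]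

lemma smul_cancel {c c' : F} {x : B d} (h : c • x = c' • x) (hne : c ≠ c') : x = 0 := by
  have h0 : (c - c') • x = 0 := by rw [sub_smul, h, sub_self]
  have hcc : c - c' ≠ 0 := sub_ne_zero.mpr hne
  calc x = (c - c')⁻¹ • ((c - c') • x) := by
        rw [smul_smul, inv_mul_cancel₀ hcc, one_smul]
    _ = 0 := by rw [h0, smul_zero]

end Eigen
-- chunk 4: weight shifting
section Shift
variable {d : ℕ}

lemma pj_e_pj {k j : ℕ} (hk : k ∈ Finset.range (d + 1)) (hj : j ∈ Finset.range (d + 1))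
    (hne : k ≠ j + 1) : pj d k * (bE d * pj d j) = 0 := by
  set x := pj d k * (bE d * pj d j) with hx
  have hA : bK1 d * x = ((v : F) ^ k) • x := by
    rw [hx, ← mul_assoc, K1_mul_pj hk, smul_mul_assoc]
  have hB : bK1 d * x = ((v : F) ^ (j + 1)) • x := by
    calc bK1 d * x = (bK1 d * pj d k) * (bE d * pj d j) := by rw [hx, mul_assoc]
      _ = (pj d k * bK1 d) * (bE d * pj d j) := by rw [K1_mul_pj hk, pj_mul_K1 hk]
      _ = pj d k * ((bK1 d * bE d) * pj d j) := by rw [mul_assoc, ← mul_assoc (bK1 d)]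
      _ = pj d k * ((v • (bE d * bK1 d)) * pj d j) := by rw [rK1e]
      _ = v • (pj d k * (bE d * (bK1 d * pj d j))) := by
          simp only [smul_mul_assoc, mul_smul_comm, mul_assoc]
      _ = v • (pj d k * (bE d * (((v : F) ^ j) • pj d j))) := by rw [K1_mul_pj hj]
      _ = ((v : F) ^ (j + 1)) • x := by
          simp only [mul_smul_comm, smul_smul, hx, mul_assoc]
          rw [pow_succ, mul_comm]
  exact smul_cancel (hA.symm.trans hB) (fun h => hne (vpow_injective h))

lemma pj_f_pj {k j : ℕ} (hk : k ∈ Finset.range (d + 1)) (hj : j ∈ Finset.range (d + 1))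
    (hne : k + 1 ≠ j) : pj d k * (bF d * pj d j) = 0 := by
  set x := pj d k * (bF d * pj d j) with hx
  have hA : bK1 d * x = ((v : F) ^ k) • x := by
    rw [hx, ← mul_assoc, K1_mul_pj hk, smul_mul_assoc]
  have hB : v • (bK1 d * x) = ((v : F) ^ j) • x := by
    calc v • (bK1 d * x) = v • ((bK1 d * pj d k) * (bF d * pj d j)) := by rw [hx, mul_assoc]
      _ = v • ((pj d k * bK1 d) * (bF d * pj d j)) := by rw [K1_mul_pj hk, pj_mul_K1 hk]
      _ = v • (pj d k * ((bK1 d * bF d) * pj d j)) := by rw [mul_assoc, ← mul_assoc (bK1 d)]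
      _ = v • (pj d k * ((v⁻¹ • (bF d * bK1 d)) * pj d j)) := by rw [rK1f]
      _ = (v * v⁻¹) • (pj d k * (bF d * (bK1 d * pj d j))) := by
          simp only [smul_mul_assoc, mul_smul_comm, smul_smul, mul_assoc]
      _ = pj d k * (bF d * (bK1 d * pj d j)) := by
          rw [mul_inv_cancel₀ v_ne_zero, one_smul]
      _ = ((v : F) ^ j) • x := by
          rw [K1_mul_pj hj]; simp only [mul_smul_comm, hx]
  have h2 : ((v : F) ^ (k + 1)) • x = ((v : F) ^ j) • x := by
    rw [← hB, hA, smul_smul, pow_succ, mul_comm]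
  exact smul_cancel h2 (fun h => hne (vpow_injective h))

lemma e_mul_pj {j : ℕ} (hj : j ∈ Finset.range (d + 1)) :
    bE d * pj d j = if j + 1 ∈ Finset.range (d + 1)
      then pj d (j + 1) * (bE d * pj d j) else 0 := by
  have h1 : bE d * pj d j = ∑ k ∈ Finset.range (d + 1), pj d k * (bE d * pj d j) := by
    rw [← Finset.sum_mul, sum_pj, one_mul]
  by_cases h : j + 1 ∈ Finset.range (d + 1)
  · rw [if_pos h]
    conv_lhs => rw [h1]
    exact Finset.sum_eq_single_of_mem _ h (fun k hk hne => pj_e_pj hk hj hne)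
  · rw [if_neg h, h1]
    exact Finset.sum_eq_zero fun k hk => pj_e_pj hk hj (fun he => h (he ▸ hk))

lemma f_mul_pj {j : ℕ} (hj : j ∈ Finset.range (d + 1)) :
    bF d * pj d j = if j = 0 then 0 else pj d (j - 1) * (bF d * pj d j) := by
  have h1 : bF d * pj d j = ∑ k ∈ Finset.range (d + 1), pj d k * (bF d * pj d j) := by
    rw [← Finset.sum_mul, sum_pj, one_mul]
  by_cases h : j = 0
  · rw [if_pos h, h1]
    exact Finset.sum_eq_zero fun k hk => pj_f_pj hk hj (by omega)
  · rw [if_neg h]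
    conv_lhs => rw [h1]
    refine Finset.sum_eq_single_of_mem (j - 1) ?_ (fun k hk hne => pj_f_pj hk hj (by omega))
    simp only [Finset.mem_range] at hj ⊢; omega

lemma epow_mul_pj (a : ℕ) : ∀ j : ℕ, j ≤ d → d < a + j → bE d ^ a * pj d j = 0 := by
  induction a with
  | zero => intro j h1 h2; omega
  | succ a ih =>
    intro j h1 h2
    have hj : j ∈ Finset.range (d + 1) := Finset.mem_range.mpr (by omega)
    rw [pow_succ, mul_assoc, e_mul_pj hj]
    by_cases h : j + 1 ∈ Finset.range (d + 1)
    · rw [if_pos h, ← mul_assoc, ih (j + 1) (by simpa using Finset.mem_range.mp h) (by omega),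
        zero_mul]
    · rw [if_neg h, mul_zero]

lemma fpow_mul_pj (a : ℕ) : ∀ j : ℕ, j ≤ d → j < a → bF d ^ a * pj d j = 0 := by
  induction a with
  | zero => intro j h1 h2; omega
  | succ a ih =>
    intro j h1 h2
    have hj : j ∈ Finset.range (d + 1) := Finset.mem_range.mpr (by omega)
    rw [pow_succ, mul_assoc, f_mul_pj hj]
    by_cases h : j = 0
    · rw [if_pos h, mul_zero]
    · rw [if_neg h, ← mul_assoc, ih (j - 1) (by omega) (by omega), zero_mul]

lemma pj_mul_e {j : ℕ} (hj : j ∈ Finset.range (d + 1)) :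
    pj d j * bE d = if j = 0 then 0 else pj d j * (bE d * pj d (j - 1)) := by
  have h1 : pj d j * bE d = ∑ k ∈ Finset.range (d + 1), pj d j * (bE d * pj d k) := by
    calc pj d j * bE d = pj d j * (bE d * ∑ k ∈ Finset.range (d + 1), pj d k) := by
          rw [sum_pj, mul_one]
      _ = _ := by rw [Finset.mul_sum, Finset.mul_sum]
  by_cases h : j = 0
  · rw [if_pos h, h1]
    exact Finset.sum_eq_zero fun k hk => pj_e_pj hj hk (by omega)
  · rw [if_neg h]
    conv_lhs => rw [h1]
    refine Finset.sum_eq_single_of_mem (j - 1) ?_ (fun k hk hne => pj_e_pj hj hk (by omega))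
    simp only [Finset.mem_range] at hj ⊢; omega

lemma pj_mul_f {j : ℕ} (hj : j ∈ Finset.range (d + 1)) :
    pj d j * bF d = if j + 1 ∈ Finset.range (d + 1)
      then pj d j * (bF d * pj d (j + 1)) else 0 := by
  have h1 : pj d j * bF d = ∑ k ∈ Finset.range (d + 1), pj d j * (bF d * pj d k) := by
    calc pj d j * bF d = pj d j * (bF d * ∑ k ∈ Finset.range (d + 1), pj d k) := by
          rw [sum_pj, mul_one]
      _ = _ := by rw [Finset.mul_sum, Finset.mul_sum]
  by_cases h : j + 1 ∈ Finset.range (d + 1)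
  · rw [if_pos h]
    conv_lhs => rw [h1]
    exact Finset.sum_eq_single_of_mem _ h (fun k hk hne => pj_f_pj hj hk (by omega))
  · rw [if_neg h, h1]
    exact Finset.sum_eq_zero fun k hk => pj_f_pj hj hk (fun he => h (he ▸ hk))

lemma pj_mul_epow (a : ℕ) : ∀ j : ℕ, j ≤ d → j < a → pj d j * bE d ^ a = 0 := by
  induction a with
  | zero => intro j h1 h2; omega
  | succ a ih =>
    intro j h1 h2
    have hj : j ∈ Finset.range (d + 1) := Finset.mem_range.mpr (by omega)
    rw [pow_succ', ← mul_assoc, pj_mul_e hj]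
    by_cases h : j = 0
    · rw [if_pos h, zero_mul]
    · rw [if_neg h]
      calc pj d j * (bE d * pj d (j - 1)) * bE d ^ a
          = pj d j * (bE d * (pj d (j - 1) * bE d ^ a)) := by simp only [mul_assoc]
        _ = 0 := by rw [ih (j - 1) (by omega) (by omega), mul_zero, mul_zero]

lemma pj_mul_fpow (a : ℕ) : ∀ j : ℕ, j ≤ d → d < a + j → pj d j * bF d ^ a = 0 := by
  induction a with
  | zero => intro j h1 h2; omega
  | succ a ih =>
    intro j h1 h2
    have hj : j ∈ Finset.range (d + 1) := Finset.mem_range.mpr (by omega)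
    rw [pow_succ', ← mul_assoc, pj_mul_f hj]
    by_cases h : j + 1 ∈ Finset.range (d + 1)
    · rw [if_pos h]
      calc pj d j * (bF d * pj d (j + 1)) * bF d ^ a
          = pj d j * (bF d * (pj d (j + 1) * bF d ^ a)) := by simp only [mul_assoc]
        _ = 0 := by
            rw [ih (j + 1) (by simpa using Finset.mem_range.mp h) (by omega), mul_zero, mul_zero]
    · rw [if_neg h, zero_mul]

end Shift
-- chunk 5: Kbox action
section KboxAct
variable {d : ℕ}

lemma zv_ne : (v : F) ≠ 0 := v_ne_zero

/-- Generic action of `qK X Xinv 0 t` on an eigenvector. -/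
lemma qK_mul_pj {X Xinv : B d} {w : ℤ} {j : ℕ}
    (hX : X * pj d j = ((v : F) ^ w) • pj d j)
    (hXi : Xinv * pj d j = ((v : F) ^ (-w)) • pj d j) (t : ℕ) :
    qK X Xinv 0 t * pj d j =
      (∏ i ∈ Finset.range t, (((v : F) ^ ((i : ℤ) + 1) - v ^ (-((i : ℤ) + 1)))⁻¹ *
        ((v : F) ^ (w - (i : ℤ)) - v ^ ((i : ℤ) - w)))) • pj d j := by
  induction t with
  | zero => simp [qK]
  | succ t ih =>
    have hsplit : qK X Xinv 0 (t + 1) = qK X Xinv 0 t *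
        (((v : F) ^ ((t : ℤ) + 1) - v ^ (-((t : ℤ) + 1)))⁻¹ •
          ((v : F) ^ ((0 : ℤ) - (t : ℤ)) • X - v ^ ((t : ℤ) - (0 : ℤ)) • Xinv)) := by
      simp [qK, List.range_succ]
    have hfac : (((v : F) ^ ((0 : ℤ) - (t : ℤ)) • X - v ^ ((t : ℤ) - (0 : ℤ)) • Xinv)) * pj d j
        = ((v : F) ^ (w - (t : ℤ)) - v ^ ((t : ℤ) - w)) • pj d j := by
      rw [sub_mul, smul_mul_assoc, smul_mul_assoc, hX, hXi, smul_smul, smul_smul,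
        ← zpow_add₀ zv_ne, ← zpow_add₀ zv_ne, ← sub_smul]
      congr 2 <;> ring_nf
    rw [hsplit, mul_assoc, smul_mul_assoc, hfac, smul_smul, mul_smul_comm, ih,
      smul_smul, Finset.prod_range_succ]
    congr 1
    exact mul_comm _ _

lemma K1_mul_pj' {j : ℕ} (hj : j ∈ Finset.range (d + 1)) :
    bK1 d * pj d j = ((v : F) ^ ((j : ℕ) : ℤ)) • pj d j := by
  rw [K1_mul_pj hj, zpow_natCast]

lemma K1'_mul_pj' {j : ℕ} (hj : j ∈ Finset.range (d + 1)) :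
    bK1' d * pj d j = ((v : F) ^ (-((j : ℕ) : ℤ))) • pj d j := by
  rw [K1'_mul_pj hj, zpow_neg, zpow_natCast]

lemma K2_mul_pj' {j : ℕ} (hj : j ∈ Finset.range (d + 1)) :
    bK2 d * pj d j = ((v : F) ^ ((d : ℤ) - (j : ℤ))) • pj d j := by
  rw [rK2eq, smul_mul_assoc, K1'_mul_pj' hj, smul_smul]
  congr 1
  rw [← zpow_natCast (v : F) d, ← zpow_add₀ zv_ne, sub_eq_add_neg]

lemma K2'_mul_pj' {j : ℕ} (hj : j ∈ Finset.range (d + 1)) :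
    bK2' d * pj d j = ((v : F) ^ (-((d : ℤ) - (j : ℤ)))) • pj d j := by
  rw [rK2'eq, smul_mul_assoc, K1_mul_pj' hj, smul_smul]
  congr 1
  rw [← zpow_natCast (v : F) d, ← zpow_neg, ← zpow_add₀ zv_ne]
  congr 1
  ring

/-- `Kbox` acts on `pj d j` by a scalar. -/
lemma Kbox_mul_pj (b₁ b₂ : ℕ) {j : ℕ} (hj : j ∈ Finset.range (d + 1)) :
    Kbox d b₁ b₂ * pj d j =
      ((∏ i ∈ Finset.range b₂, (((v : F) ^ ((i : ℤ) + 1) - v ^ (-((i : ℤ) + 1)))⁻¹ *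
          ((v : F) ^ (((d : ℤ) - (j : ℤ)) - (i : ℤ)) - v ^ ((i : ℤ) - ((d : ℤ) - (j : ℤ)))))) *
       (∏ i ∈ Finset.range b₁, (((v : F) ^ ((i : ℤ) + 1) - v ^ (-((i : ℤ) + 1)))⁻¹ *
          ((v : F) ^ (((j : ℕ) : ℤ) - (i : ℤ)) - v ^ ((i : ℤ) - ((j : ℕ) : ℤ)))))) • pj d j := by
  rw [Kbox, mul_assoc, qK_mul_pj (K2_mul_pj' hj) (K2'_mul_pj' hj) b₂, mul_smul_comm,
    qK_mul_pj (K1_mul_pj' hj) (K1'_mul_pj' hj) b₁, smul_smul]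

lemma Kbox_mul_pj_eq_zero (b₁ b₂ : ℕ) {j : ℕ} (hj : j ∈ Finset.range (d + 1))
    (hsum : b₁ + b₂ = d) (hne : j ≠ b₁) : Kbox d b₁ b₂ * pj d j = 0 := by
  rw [Kbox_mul_pj b₁ b₂ hj]
  have hjd : j ≤ d := by simpa [Nat.lt_succ_iff] using Finset.mem_range.mp hj
  rcases Nat.lt_or_ge j b₁ with hlt | hge
  · -- the second product has a zero factor at i = j
    have hz : (((v : F) ^ ((j : ℤ) + 1) - v ^ (-((j : ℤ) + 1)))⁻¹ *
        ((v : F) ^ (((j : ℕ) : ℤ) - (j : ℤ)) - v ^ ((j : ℤ) - ((j : ℕ) : ℤ)))) = 0 := by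
      simp
    rw [Finset.prod_eq_zero (Finset.mem_range.mpr hlt) hz, mul_zero, zero_smul]
  · -- j > b₁; the first product has a zero factor at i = d - j
    have hgt : b₁ < j := lt_of_le_of_ne hge (Ne.symm hne)
    have hmem : d - j ∈ Finset.range b₂ := Finset.mem_range.mpr (by omega)
    have hcast : (d : ℤ) - (j : ℤ) = ((d - j : ℕ) : ℤ) := by omega
    have hz : (((v : F) ^ (((d - j : ℕ) : ℤ) + 1) - v ^ (-(((d - j : ℕ) : ℤ) + 1)))⁻¹ *
        ((v : F) ^ (((d : ℤ) - (j : ℤ)) - ((d - j : ℕ) : ℤ))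
          - v ^ (((d - j : ℕ) : ℤ) - ((d : ℤ) - (j : ℤ))))) = 0 := by
      rw [hcast]
      simp
    rw [Finset.prod_eq_zero hmem hz, zero_mul, zero_smul]

/-- `Kbox d b₁ b₂` is a scalar multiple of `pj d b₁`. -/
lemma Kbox_eq (b₁ b₂ : ℕ) (hsum : b₁ + b₂ = d) :
    ∃ c : F, Kbox d b₁ b₂ = c • pj d b₁ := by
  have hb1 : b₁ ∈ Finset.range (d + 1) := Finset.mem_range.mpr (by omega)
  have h1 : Kbox d b₁ b₂ = ∑ j ∈ Finset.range (d + 1), Kbox d b₁ b₂ * pj d j := by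
    rw [← Finset.mul_sum, sum_pj, mul_one]
  rw [h1, Finset.sum_eq_single_of_mem b₁ hb1
    (fun j hj hne => Kbox_mul_pj_eq_zero b₁ b₂ hj hsum hne)]
  exact ⟨_, Kbox_mul_pj b₁ b₂ hb1⟩

end KboxAct
/-- vanishing conditions, and nilpotency `e^{d+1} = 0 = f^{d+1}` in `B_d`. -/
theorem stmt15 (d : ℕ) :
    (∀ a b₁ b₂ : ℕ, b₁ + b₂ = d → d + 1 ≤ a + b₁ →
      bE d ^ a * Kbox d b₁ b₂ = 0 ∧ Kbox d b₁ b₂ * bF d ^ a = 0) ∧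
    (∀ a b₁ b₂ : ℕ, b₁ + b₂ = d → d + 1 ≤ a + b₂ →
      bF d ^ a * Kbox d b₁ b₂ = 0 ∧ Kbox d b₁ b₂ * bE d ^ a = 0) ∧
    bE d ^ (d + 1) = 0 ∧ bF d ^ (d + 1) = 0 := by
  refine ⟨?_, ?_, ?_, ?_⟩
  · intro a b₁ b₂ hsum hge
    obtain ⟨c, hc⟩ := Kbox_eq b₁ b₂ hsum
    have hb1d : b₁ ≤ d := by omega
    constructor
    · rw [hc, mul_smul_comm, epow_mul_pj a b₁ hb1d (by omega), smul_zero]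
    · rw [hc, smul_mul_assoc, pj_mul_fpow a b₁ hb1d (by omega), smul_zero]
  · intro a b₁ b₂ hsum hge
    obtain ⟨c, hc⟩ := Kbox_eq b₁ b₂ hsum
    have hb1d : b₁ ≤ d := by omega
    constructor
    · rw [hc, mul_smul_comm, fpow_mul_pj a b₁ hb1d (by omega), smul_zero]
    · rw [hc, smul_mul_assoc, pj_mul_epow a b₁ hb1d (by omega), smul_zero]
  · have h1 : bE d ^ (d + 1) = ∑ j ∈ Finset.range (d + 1), bE d ^ (d + 1) * pj d j := by
      rw [← Finset.mul_sum, sum_pj, mul_one]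
    rw [h1]
    exact Finset.sum_eq_zero fun j hj =>
      epow_mul_pj (d + 1) j (by simpa [Nat.lt_succ_iff] using Finset.mem_range.mp hj) (by omega)
  · have h1 : bF d ^ (d + 1) = ∑ j ∈ Finset.range (d + 1), bF d ^ (d + 1) * pj d j := by
      rw [← Finset.mul_sum, sum_pj, mul_one]
    rw [h1]
    exact Finset.sum_eq_zero fun j hj =>
      fpow_mul_pj (d + 1) j (by simpa [Nat.lt_succ_iff] using Finset.mem_range.mp hj)
        (by simpa using Finset.mem_range.mp hj)
end
end
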